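/- arXiv:0707.3244 — 2 statements merged into one kernel-verified Lean document; each statement's English description precedes it below -/
import Mathlib

section
/- For all positive integers m and n, the following identity of rational numbers holds: Σ_{k=1−n}^{n} (−1)^k / (2n−2k+1) · C(k, m) · binom(4n−1, 2n+2k−1) = Σ_{k=1}^{n} Σ_{j=1−k}^{k} 4^(n−k) (−1)^j / (2n−2k+1) · C(j, m) · binom(2n−1, 2k−1) · binom(2k−1, k−j). (In the paper the outer sum on the right runs over all k ≥ 1, but binom(2n−1, 2k−1) = 0 for k > n, so it truncates at k = n.) -/
/-!
The identity holds term by term in `j`. After exchanging the sums, the coefficient of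
`(-1)^j C(j, m)` on the right is `∑ₖ 4^(n-k)/(2n-2k+1) · binom(2n-1, 2k-1) · binom(2k-1, k-j)`.
Absorption turns `binom(2n-1, 2k-1)/(2n-2k+1)` into `binom(2n, 2k-1)/(2n)`, and the resulting
sum is `1/(4n)` times the coefficient of `X^(2n+2j-1)` in `((X² + 1) + 2X)^(2n) = (1 + X)^(4n)`,
that is `binom(4n, 2n+2j-1)/(4n) = binom(4n-1, 2n+2j-1)/(2n-2j+1)`.
-/

/-- The generalized binomial coefficient `C(x, m) = x(x−1)⋯(x−m+1)/m!` for an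
integer `x` (possibly negative or less than `m`) and a natural number `m`. -/
def genChoose (x : ℤ) (m : ℕ) : ℚ :=
  (∏ i ∈ Finset.range m, ((x : ℚ) - i)) / Nat.factorial m

open Polynomial

theorem coeff_X_sq_add_one_pow {R : Type*} [CommSemiring R] (b r : ℕ) :
    ((X ^ 2 + 1 : R[X]) ^ b).coeff r = if 2 ∣ r then (b.choose (r / 2) : R) else 0 := by
  have h : (X ^ 2 + 1 : R[X]) = expand R 2 (X + 1) := by simp
  rw [h, ← map_pow, coeff_expand two_pos, coeff_X_add_one_pow]

theorem sum_range_two_mul_add_one_eq_even_add_odd {M : Type*} [AddCommMonoid M] (f : ℕ → M)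
    (n : ℕ) :
    ∑ b ∈ Finset.range (2 * n + 1), f b
      = ∑ k ∈ Finset.range (n + 1), f (2 * k) + ∑ k ∈ Finset.range n, f (2 * k + 1) := by
  induction n with
  | zero => simp
  | succ n ih =>
    rw [show 2 * (n + 1) + 1 = 2 * n + 1 + 1 + 1 by ring, Finset.sum_range_succ,
      Finset.sum_range_succ, ih,
      Finset.sum_range_succ (fun k => f (2 * k)) (n + 1),
      Finset.sum_range_succ (fun k => f (2 * k + 1)) n, show 2 * n + 1 + 1 = 2 * (n + 1) by ring]
    abel

theorem choose_two_mul_add_eq_sum (N t : ℕ) :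
    (2 * N).choose (N + t) = ∑ b ∈ Finset.range (N + 1),
      2 ^ (N - b) * N.choose b * if 2 ∣ b + t then b.choose ((b + t) / 2) else 0 := by
  have hexp : (X + 1 : ℕ[X]) ^ (2 * N) = ∑ b ∈ Finset.range (N + 1),
      C (2 ^ (N - b) * N.choose b) * ((X ^ 2 + 1) ^ b * X ^ (N - b)) := by
    rw [pow_mul, show (X + 1 : ℕ[X]) ^ 2 = (X ^ 2 + 1) + C 2 * X by simp; ring, add_pow]
    refine Finset.sum_congr rfl fun b _ => ?_
    simp only [mul_pow, ← C_pow, map_mul, ← C_eq_natCast, Nat.cast_id]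
    ring
  have hcoeff := congrArg (coeff · (N + t)) hexp
  simp only [coeff_X_add_one_pow, finsetSum_coeff, coeff_C_mul, Nat.cast_id] at hcoeff
  rw [hcoeff]
  refine Finset.sum_congr rfl fun b hb => ?_
  rw [show N + t = b + t + (N - b) by have := Finset.mem_range.mp hb; omega, coeff_mul_X_pow,
    coeff_X_sq_add_one_pow, Nat.cast_id]

theorem choose_sub_one_div_sub_eq_choose_div (N r : ℕ) (h : r < N) :
    ((N - 1).choose r : ℚ) / ((N : ℚ) - r) = N.choose r / N := by
  obtain ⟨M, rfl⟩ : ∃ M, N = M + 1 := ⟨N - 1, by omega⟩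
  have key := congrArg (Nat.cast : ℕ → ℚ) (Nat.choose_mul_succ_eq M r)
  push_cast [Nat.cast_sub h.le] at key
  have hr : (r : ℚ) < M + 1 := by exact_mod_cast h
  rw [Nat.add_sub_cancel, div_eq_div_iff (by push_cast; linarith) (by positivity)]
  push_cast
  linear_combination key

theorem choose_four_mul_odd_eq_sum (n q : ℕ) :
    (4 * n).choose (2 * n + 2 * q + 1) = ∑ k ∈ Finset.Icc 1 n,
      2 ^ (2 * n - 2 * k + 1) * (2 * n).choose (2 * k - 1) * (2 * k - 1).choose (k + q) := by
  rw [show 4 * n = 2 * (2 * n) by ring, show 2 * n + 2 * q + 1 = 2 * n + (2 * q + 1) by ring,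
    choose_two_mul_add_eq_sum, sum_range_two_mul_add_one_eq_even_add_odd]
  have heven : ∀ k ∈ Finset.range (n + 1), (2 ^ (2 * n - 2 * k) * (2 * n).choose (2 * k) *
      if 2 ∣ 2 * k + (2 * q + 1) then (2 * k).choose ((2 * k + (2 * q + 1)) / 2) else 0) = 0 :=
    fun k _ => by rw [if_neg (by omega), mul_zero]
  rw [Finset.sum_eq_zero heven, zero_add, ← Finset.Ico_add_one_right_eq_Icc,
    Finset.sum_Ico_eq_sum_range, Nat.add_sub_cancel]
  refine Finset.sum_congr rfl fun k hk => ?_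
  have hk := Finset.mem_range.mp hk
  rw [if_pos (by omega), show (2 * k + 1 + (2 * q + 1)) / 2 = 1 + k + q by omega,
    show 2 * n - (2 * k + 1) = 2 * n - 2 * (1 + k) + 1 by omega,
    show 2 * k + 1 = 2 * (1 + k) - 1 by omega]

theorem sum_four_pow_mul_choose_mul_choose (n q : ℕ) :
    ∑ k ∈ Finset.Icc 1 n, (4 : ℚ) ^ (n - k) / (2 * (n : ℚ) - 2 * (k : ℚ) + 1) *
        ((2 * n - 1).choose (2 * k - 1) : ℚ) * ((2 * k - 1).choose (k + q) : ℚ)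
      = ((4 * n).choose (2 * n + 2 * q + 1) : ℚ) / (4 * n) := by
  rw [choose_four_mul_odd_eq_sum, Nat.cast_sum, Finset.sum_div]
  refine Finset.sum_congr rfl fun k hk => ?_
  obtain ⟨hk₁, hkn⟩ := Finset.mem_Icc.mp hk
  have habs := choose_sub_one_div_sub_eq_choose_div (2 * n) (2 * k - 1) (by omega)
  have hcast : ((2 * n : ℕ) : ℚ) - ((2 * k - 1 : ℕ) : ℚ) = 2 * (n : ℚ) - 2 * (k : ℚ) + 1 := by
    push_cast [Nat.cast_sub (show 1 ≤ 2 * k by omega)]; ring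
  have hpow : (2 : ℚ) ^ (2 * n - 2 * k + 1) = 2 * 4 ^ (n - k) := by
    rw [show 2 * n - 2 * k + 1 = 2 * (n - k) + 1 by omega, pow_succ, pow_mul]; norm_num; ring
  have hn : (n : ℚ) ≠ 0 := Nat.cast_ne_zero.mpr (by omega)
  rw [hcast, Nat.cast_mul (2 : ℕ) n, Nat.cast_ofNat] at habs
  push_cast
  rw [hpow, div_mul_eq_mul_div, mul_div_assoc, habs]
  field_simp
  ring

theorem sum_filter_four_pow_mul_choose_mul_choose (n : ℕ) (j : ℤ) (hj₁ : 1 - (n : ℤ) ≤ j)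
    (hj₂ : j ≤ n) :
    ∑ k ∈ (Finset.Icc 1 n).filter (fun k : ℕ => 1 - (k : ℤ) ≤ j ∧ j ≤ k),
        (4 : ℚ) ^ (n - k) / (2 * (n : ℚ) - 2 * (k : ℚ) + 1) *
          ((2 * n - 1).choose (2 * k - 1) : ℚ) * ((2 * k - 1).choose ((k : ℤ) - j).toNat : ℚ)
      = ((4 * n - 1).choose (2 * (n : ℤ) + 2 * j - 1).toNat : ℚ)
          / (2 * (n : ℚ) - 2 * (j : ℚ) + 1) := by
  -- Both sides depend on `j` only through `|2j - 1| = 2q + 1`.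
  obtain ⟨q, hq⟩ : ∃ q : ℕ, j = q + 1 ∨ j = -q := by
    rcases le_or_gt 1 j with h | h
    · exact ⟨(j - 1).toNat, Or.inl (by omega)⟩
    · exact ⟨(-j).toNat, Or.inr (by omega)⟩
  have hchoose : ∀ k : ℕ, q < k →
      (2 * k - 1).choose ((k : ℤ) - j).toNat = (2 * k - 1).choose (k + q) := by
    intro k hk
    rcases hq with rfl | rfl
    · rw [show ((k : ℤ) - (q + 1)).toNat = 2 * k - 1 - (k + q) by omega,
        Nat.choose_symm (by omega)]
    · rw [show ((k : ℤ) - -q).toNat = k + q by omega]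
  have hsymm : (4 * n).choose (2 * (n : ℤ) + 2 * j - 1).toNat
      = (4 * n).choose (2 * n + 2 * q + 1) := by
    rcases hq with rfl | rfl
    · rw [show (2 * (n : ℤ) + 2 * (q + 1) - 1).toNat = 2 * n + 2 * q + 1 by omega]
    · rw [show (2 * (n : ℤ) + 2 * -q - 1).toNat = 4 * n - (2 * n + 2 * q + 1) by omega,
        Nat.choose_symm (by omega)]
  have hcast : ((4 * n : ℕ) : ℚ) - ((2 * (n : ℤ) + 2 * j - 1).toNat : ℚ)
      = 2 * (n : ℚ) - 2 * (j : ℚ) + 1 := by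
    rw [show (((2 * (n : ℤ) + 2 * j - 1).toNat : ℕ) : ℚ) = ((2 * (n : ℤ) + 2 * j - 1 : ℤ) : ℚ) by
      exact_mod_cast Int.toNat_of_nonneg (by omega)]
    push_cast; ring
  rw [← hcast, choose_sub_one_div_sub_eq_choose_div (4 * n) _ (by omega), hsymm,
    Nat.cast_mul 4 n, Nat.cast_ofNat, ← sum_four_pow_mul_choose_mul_choose n q, Finset.sum_filter]
  refine Finset.sum_congr rfl fun k hk => ?_
  have hk₁ := (Finset.mem_Icc.mp hk).1
  by_cases hqk : q < k
  · rw [if_pos (by omega), hchoose k hqk]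
  · rw [if_neg (by omega), Nat.choose_eq_zero_of_lt (show 2 * k - 1 < k + q by omega),
      Nat.cast_zero, mul_zero]

theorem genChoose_identity_odd_general (m n : ℕ) :
    ∑ k ∈ Finset.Icc (1 - (n : ℤ)) (n : ℤ),
      ((k.negOnePow : ℤ) : ℚ) / (2 * (n : ℚ) - 2 * (k : ℚ) + 1) * genChoose k m *
        (Nat.choose (4 * n - 1) (2 * (n : ℤ) + 2 * k - 1).toNat : ℚ)
    = ∑ k ∈ Finset.Icc 1 n, ∑ j ∈ Finset.Icc (1 - (k : ℤ)) (k : ℤ),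
        (4 : ℚ) ^ (n - k) *
          ((j.negOnePow : ℤ) : ℚ) / (2 * (n : ℚ) - 2 * (k : ℚ) + 1) * genChoose j m *
          (Nat.choose (2 * n - 1) (2 * k - 1) : ℚ) *
          (Nat.choose (2 * k - 1) ((k : ℤ) - j).toNat : ℚ) := by
  rw [Finset.sum_comm' (t' := Finset.Icc (1 - (n : ℤ)) n)
    (s' := fun j => (Finset.Icc 1 n).filter (fun k : ℕ => 1 - (k : ℤ) ≤ j ∧ j ≤ k))
    (fun k j => by simp only [Finset.mem_Icc, Finset.mem_filter]; omega)]
  refine Finset.sum_congr rfl fun j hj => ?_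
  obtain ⟨hj₁, hj₂⟩ := Finset.mem_Icc.mp hj
  rw [mul_right_comm, div_mul_eq_mul_div, mul_div_assoc,
    ← sum_filter_four_pow_mul_choose_mul_choose n j hj₁ hj₂, Finset.mul_sum, Finset.sum_mul]
  exact Finset.sum_congr rfl fun k _ => by ring

/-- For all positive integers `m`, `n`:
`∑_{k=1−n}^{n} (−1)^k/(2n−2k+1) ⬝ C(k, m) ⬝ binom(4n−1, 2n+2k−1)
  = ∑_{k=1}^{n} ∑_{j=1−k}^{k} 4^(n−k)(−1)^j/(2n−2k+1) ⬝ C(j, m) ⬝ binom(2n−1, 2k−1) binom(2k−1, k−j)`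
(the outer sum over `k ≥ 1` truncates at `k = n` since `binom(2n−1, 2k−1) = 0` for `k > n`). -/
theorem genChoose_identity_odd (m n : ℕ) (hm : 0 < m) (hn : 0 < n) :
    ∑ k ∈ Finset.Icc (1 - (n : ℤ)) (n : ℤ),
      ((k.negOnePow : ℤ) : ℚ) / (2 * (n : ℚ) - 2 * (k : ℚ) + 1) * genChoose k m *
        (Nat.choose (4 * n - 1) (2 * (n : ℤ) + 2 * k - 1).toNat : ℚ)
    = ∑ k ∈ Finset.Icc 1 n, ∑ j ∈ Finset.Icc (1 - (k : ℤ)) (k : ℤ),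
        (4 : ℚ) ^ (n - k) *
          ((j.negOnePow : ℤ) : ℚ) / (2 * (n : ℚ) - 2 * (k : ℚ) + 1) * genChoose j m *
          (Nat.choose (2 * n - 1) (2 * k - 1) : ℚ) *
          (Nat.choose (2 * k - 1) ((k : ℤ) - j).toNat : ℚ) :=
  genChoose_identity_odd_general m n
end

section
/- For all positive integers m and n, the following identity of rational numbers holds: Σ_{k=−n}^{n} (−1)^k / (2n−2k+1) · C(k, m) · binom(4n+1, 2n+2k+1) = Σ_{k=1}^{n} Σ_{j=−k}^{k} 4^(n−k) (−1)^j / (2n−2k+1) · C(j, m) · binom(2n, 2k) · binom(2k, k−j). (In the paper the outer sum on the right runs over all k ≥ 1, but binom(2n, 2k) = 0 for k > n, so it truncates at k = n.) -/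
open Finset Polynomial

theorem genChoose_zero_left {m : ℕ} (hm : 0 < m) : genChoose 0 m = 0 := by
  rw [genChoose, prod_eq_zero (mem_range.2 hm) (by simp), zero_div]

theorem sum_range_two_mul {M : Type*} [AddCommMonoid M] (f : ℕ → M) (n : ℕ) :
    ∑ l ∈ range (2 * n), f l = ∑ k ∈ range n, (f (2 * k) + f (2 * k + 1)) := by
  induction n with
  | zero => simp
  | succ n ih =>
    rw [mul_add, mul_one, sum_range_succ, sum_range_succ, ih, sum_range_succ, add_assoc]

theorem coeff_one_add_X_sq_pow (l r : ℕ) :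
    ((1 + X ^ 2 : ℕ[X]) ^ l).coeff r = if 2 ∣ r then l.choose (r / 2) else 0 := by
  have : (1 + X ^ 2 : ℕ[X]) ^ l = expand ℕ 2 ((1 + X) ^ l) := by simp
  rw [this, coeff_expand two_pos, coeff_one_add_X_pow, Nat.cast_id]

theorem coeff_one_add_X_sq_pow_mul_two_X_pow (N l i c : ℕ) (hl : l ≤ N) :
    ((1 + X ^ 2 : ℕ[X]) ^ l * (C 2 * X) ^ (N - l) * (c : ℕ[X])).coeff (N + 2 * i) =
      2 ^ (N - l) * c * if 2 ∣ l then l.choose (l / 2 + i) else 0 := by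
  rw [mul_pow, ← C_pow, ← C_eq_natCast, coeff_mul_C, mul_left_comm, coeff_C_mul,
    coeff_mul_X_pow', if_pos (by omega), coeff_one_add_X_sq_pow,
    show N + 2 * i - (N - l) = l + 2 * i by omega]
  simp only [Nat.dvd_add_left (dvd_mul_right 2 i), Nat.cast_id]
  split_ifs with h
  · rw [Nat.add_mul_div_left _ _ two_pos]; ring
  · simp

theorem choose_four_mul_add_two (n i : ℕ) :
    (4 * n + 2).choose (2 * n + 1 + 2 * i) =
      ∑ k ∈ range (n + 1),
        2 ^ (2 * n + 1 - 2 * k) * (2 * n + 1).choose (2 * k) * (2 * k).choose (k + i) := by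
  have hsq : (1 + X : ℕ[X]) ^ (4 * n + 2) = ((1 + X ^ 2) + C 2 * X) ^ (2 * n + 1) := by
    rw [show 4 * n + 2 = 2 * (2 * n + 1) by ring, pow_mul]; congr 1; rw [map_ofNat]; ring
  have := congrArg (coeff · (2 * n + 1 + 2 * i)) hsq
  simp only [coeff_one_add_X_pow, Nat.cast_id] at this
  rw [this, add_pow, finsetSum_coeff, show 2 * n + 1 + 1 = 2 * (n + 1) by ring, sum_range_two_mul]
  refine sum_congr rfl fun k hk => ?_
  have hk : k ≤ n := Nat.lt_succ_iff.1 (mem_range.1 hk)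
  rw [coeff_one_add_X_sq_pow_mul_two_X_pow _ _ _ _ (by omega),
    coeff_one_add_X_sq_pow_mul_two_X_pow _ _ _ _ (by omega), if_pos (dvd_mul_right 2 k),
    if_neg (by omega), Nat.mul_div_cancel_left _ two_pos]
  ring

theorem cast_choose_div_eq_succ_choose_div (N k : ℕ) (hk : k ≤ N) :
    (N.choose k : ℚ) / ((N : ℚ) + 1 - k) = ((N + 1).choose k : ℚ) / ((N : ℚ) + 1) := by
  have hpos : (0 : ℚ) < (N : ℚ) + 1 - k := by
    have : (k : ℚ) ≤ N := by exact_mod_cast hk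
    linarith
  rw [div_eq_div_iff hpos.ne' (by positivity)]
  have h := Nat.choose_mul_succ_eq N k
  rw [← Nat.cast_inj (R := ℚ)] at h
  push_cast [Nat.sub_add_comm hk, Nat.cast_sub hk] at h
  linear_combination h

theorem choose_toNat_sub (N : ℕ) (s : ℤ) (hs : |s| ≤ N) :
    (2 * N).choose (N - s).toNat = (2 * N).choose (N + s.natAbs) := by
  rw [abs_le] at hs
  rcases le_total 0 s with h | h
  · exact Nat.choose_symm_of_eq_add (by omega)
  · congr 1; omega

theorem cast_choose_toNat_div_eq_natAbs (n : ℕ) (j : ℤ) (hj : |j| ≤ n) :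
    ((4 * n + 1).choose (2 * (n : ℤ) + 2 * j + 1).toNat : ℚ) /
        (2 * (n : ℚ) - 2 * (j : ℚ) + 1) =
      ((4 * n + 2).choose (2 * n + 1 + 2 * j.natAbs) : ℚ) / (4 * n + 2) := by
  rw [abs_le] at hj
  obtain ⟨t, ht⟩ : ∃ t : ℕ, (t : ℤ) = 2 * n + 2 * j + 1 := ⟨_, Int.toNat_of_nonneg (by omega)⟩
  have htq : (t : ℚ) = 2 * n + 2 * j + 1 := by exact_mod_cast ht
  have hsymm : (4 * n + 1 + 1).choose t = (4 * n + 2).choose (2 * n + 1 + 2 * j.natAbs) := by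
    rw [show t = ((2 * n + 1 : ℕ) - -2 * j).toNat by omega,
      show 4 * n + 1 + 1 = 2 * (2 * n + 1) by ring,
      choose_toNat_sub (2 * n + 1) (-2 * j) (by rw [abs_le]; omega),
      show (-2 * j).natAbs = 2 * j.natAbs by omega]
  calc ((4 * n + 1).choose (2 * (n : ℤ) + 2 * j + 1).toNat : ℚ) /
        (2 * (n : ℚ) - 2 * (j : ℚ) + 1)
      = ((4 * n + 1).choose t : ℚ) / (((4 * n + 1 : ℕ) : ℚ) + 1 - t) := by
        rw [← ht, Int.toNat_natCast, htq]; push_cast; ring_nf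
    _ = ((4 * n + 1 + 1).choose t : ℚ) / (((4 * n + 1 : ℕ) : ℚ) + 1) :=
        cast_choose_div_eq_succ_choose_div _ _ (by omega)
    _ = _ := by rw [hsymm]; push_cast; ring_nf

theorem four_pow_div_mul_choose (n k : ℕ) (hk : k ≤ n) :
    (4 : ℚ) ^ (n - k) / (2 * (n : ℚ) - 2 * (k : ℚ) + 1) * ((2 * n).choose (2 * k) : ℚ) =
      ((2 ^ (2 * n + 1 - 2 * k) * (2 * n + 1).choose (2 * k) : ℕ) : ℚ) / (4 * n + 2) := by
  have habs := cast_choose_div_eq_succ_choose_div (2 * n) (2 * k) (by omega)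
  have hpow : (2 : ℚ) ^ (2 * n + 1 - 2 * k) = 2 * 4 ^ (n - k) := by
    rw [show 2 * n + 1 - 2 * k = 2 * (n - k) + 1 by omega, pow_succ, pow_mul, mul_comm]
    norm_num
  push_cast at habs ⊢
  rw [hpow]
  calc (4 : ℚ) ^ (n - k) / (2 * n - 2 * k + 1) * ((2 * n).choose (2 * k) : ℚ)
      = (4 : ℚ) ^ (n - k) * (((2 * n).choose (2 * k) : ℚ) / (2 * n + 1 - 2 * k)) := by ring
    _ = _ := by rw [habs]; field_simp; ring

theorem cast_choose_toNat_div_eq_sum (n : ℕ) (j : ℤ) (hj : |j| ≤ n) :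
    ((4 * n + 1).choose (2 * (n : ℤ) + 2 * j + 1).toNat : ℚ) /
        (2 * (n : ℚ) - 2 * (j : ℚ) + 1) =
      ∑ k ∈ Icc j.natAbs n, (4 : ℚ) ^ (n - k) / (2 * (n : ℚ) - 2 * (k : ℚ) + 1) *
        ((2 * n).choose (2 * k) : ℚ) * ((2 * k).choose ((k : ℤ) - j).toNat : ℚ) := by
  have hterm : ∀ k ∈ Icc j.natAbs n,
      (4 : ℚ) ^ (n - k) / (2 * (n : ℚ) - 2 * (k : ℚ) + 1) * ((2 * n).choose (2 * k) : ℚ) *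
        ((2 * k).choose ((k : ℤ) - j).toNat : ℚ) =
      ((2 ^ (2 * n + 1 - 2 * k) * (2 * n + 1).choose (2 * k) * (2 * k).choose (k + j.natAbs) : ℕ)
        : ℚ) / (4 * n + 2) := by
    intro k hk
    rw [mem_Icc] at hk
    rw [four_pow_div_mul_choose n k hk.2,
      choose_toNat_sub k j (by rw [Int.abs_eq_natAbs]; omega), div_mul_eq_mul_div, ← Nat.cast_mul]
  rw [cast_choose_toNat_div_eq_natAbs n j hj, sum_congr rfl hterm, ← sum_div, ← Nat.cast_sum,
    choose_four_mul_add_two]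
  congr 2
  refine (sum_subset (fun k hk => ?_) fun k hk hk' => ?_).symm
  · rw [mem_range]; exact Nat.lt_succ_of_le (mem_Icc.1 hk).2
  · have : k < j.natAbs := by simp only [mem_range, mem_Icc, not_and_or] at hk hk'; omega
    rw [Nat.choose_eq_zero_of_lt (n := 2 * k) (by omega), mul_zero]

theorem genChoose_identity_even_general (m n : ℕ) (hm : 0 < m) :
    ∑ k ∈ Finset.Icc (-(n : ℤ)) (n : ℤ),
      ((k.negOnePow : ℤ) : ℚ) / (2 * (n : ℚ) - 2 * (k : ℚ) + 1) * genChoose k m *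
        (Nat.choose (4 * n + 1) (2 * (n : ℤ) + 2 * k + 1).toNat : ℚ)
    = ∑ k ∈ Finset.Icc 1 n, ∑ j ∈ Finset.Icc (-(k : ℤ)) (k : ℤ),
        (4 : ℚ) ^ (n - k) *
          ((j.negOnePow : ℤ) : ℚ) / (2 * (n : ℚ) - 2 * (k : ℚ) + 1) * genChoose j m *
          (Nat.choose (2 * n) (2 * k) : ℚ) *
          (Nat.choose (2 * k) ((k : ℤ) - j).toNat : ℚ) := by
  set T : ℕ → ℤ → ℚ := fun k j => (4 : ℚ) ^ (n - k) *
    ((j.negOnePow : ℤ) : ℚ) / (2 * (n : ℚ) - 2 * (k : ℚ) + 1) * genChoose j m *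
    (Nat.choose (2 * n) (2 * k) : ℚ) * (Nat.choose (2 * k) ((k : ℤ) - j).toNat : ℚ)
  calc _ = ∑ j ∈ Icc (-(n : ℤ)) n, ∑ k ∈ Icc j.natAbs n, T k j := by
        refine sum_congr rfl fun j hj => ?_
        rw [mem_Icc, ← abs_le] at hj
        trans ((j.negOnePow : ℤ) : ℚ) * genChoose j m *
          ((4 * n + 1).choose (2 * (n : ℤ) + 2 * j + 1).toNat /
            (2 * (n : ℚ) - 2 * (j : ℚ) + 1))
        · ring
        rw [cast_choose_toNat_div_eq_sum n j hj, mul_sum]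
        exact sum_congr rfl fun k _ => by ring
    _ = ∑ k ∈ range (n + 1), ∑ j ∈ Icc (-(k : ℤ)) k, T k j :=
        sum_comm' fun j k => by simp only [mem_Icc, mem_range]; omega
    _ = _ := by
        rw [range_eq_Ico, Ico_add_one_right_eq_Icc, ← insert_Icc_add_one_left_eq_Icc n.zero_le,
          sum_insert (by simp)]
        simp [T, genChoose_zero_left hm]

/-- For all positive integers `m`, `n`:
`∑_{k=−n}^{n} (−1)^k/(2n−2k+1) ⬝ C(k, m) ⬝ binom(4n+1, 2n+2k+1)
  = ∑_{k=1}^{n} ∑_{j=−k}^{k} 4^(n−k)(−1)^j/(2n−2k+1) ⬝ C(j, m) ⬝ binom(2n, 2k) binom(2k, k−j)`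
(the outer sum over `k ≥ 1` truncates at `k = n` since `binom(2n, 2k) = 0` for `k > n`). -/
theorem genChoose_identity_even (m n : ℕ) (hm : 0 < m) (hn : 0 < n) :
    ∑ k ∈ Finset.Icc (-(n : ℤ)) (n : ℤ),
      ((k.negOnePow : ℤ) : ℚ) / (2 * (n : ℚ) - 2 * (k : ℚ) + 1) * genChoose k m *
        (Nat.choose (4 * n + 1) (2 * (n : ℤ) + 2 * k + 1).toNat : ℚ)
    = ∑ k ∈ Finset.Icc 1 n, ∑ j ∈ Finset.Icc (-(k : ℤ)) (k : ℤ),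
        (4 : ℚ) ^ (n - k) *
          ((j.negOnePow : ℤ) : ℚ) / (2 * (n : ℚ) - 2 * (k : ℚ) + 1) * genChoose j m *
          (Nat.choose (2 * n) (2 * k) : ℚ) *
          (Nat.choose (2 * k) ((k : ℤ) - j).toNat : ℚ) :=
  genChoose_identity_even_general m n hm
end
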